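/- arXiv:1807.10101 — 3 statements merged into one kernel-verified Lean document; each statement's English description precedes it below -/
import Mathlib

section
/- For all positive reals ρ₁, ρ₂ and every natural number k, the sum over all pairs (m, n) of natural numbers with m + n = k of B(ρ₁+n, ρ₂+m) · (m+n)! / (B(ρ₁,ρ₂) · n! · m!) equals 1. -/
/-! Since `B(x, y) = B(x + 1, y) + B(x, y + 1)`, the function `B` is fixed by `X + Y`, where `X` and `Y`
are the commuting unit shifts in the two arguments. Expanding `B = (X + Y)ᵏ B` by the binomial theorem
gives `B(x, y) = ∑_{i+j=k} C(k, i) B(x + j, y + i)`. -/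

/-- The Beta function `B(x,y) = Γ(x)Γ(y)/Γ(x+y)`. -/
noncomputable def betaFn (x y : ℝ) : ℝ :=
  Real.Gamma x * Real.Gamma y / Real.Gamma (x + y)

open Finset

theorem sum_antidiagonal_choose_nsmul_of_eq_add {M : Type*} [AddCommMonoid M] {f : ℝ → ℝ → M}
    (hf : ∀ x y, 0 < x → 0 < y → f x y = f (x + 1) y + f x (y + 1)) (n : ℕ) :
    ∀ x y, 0 < x → 0 < y →
      ∑ ij ∈ antidiagonal n, n.choose ij.1 • f (x + ij.1) (y + ij.2) = f x y := by
  induction n with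
  | zero => simp
  | succ n ih =>
    intro x y hx hy
    have shift_left : ∑ ij ∈ antidiagonal n, n.choose ij.2 • f (x + ↑(ij.1 + 1)) (y + ij.2) =
        ∑ ij ∈ antidiagonal n, n.choose ij.1 • f ((x + 1) + ij.1) (y + ij.2) := by
      refine sum_congr rfl fun ij hij => ?_
      rw [← mem_antidiagonal.mp hij, ← Nat.choose_symm_add]
      push_cast
      ring_nf
    have shift_right : ∑ ij ∈ antidiagonal n, n.choose ij.1 • f (x + ij.1) (y + ↑(ij.2 + 1)) =
        ∑ ij ∈ antidiagonal n, n.choose ij.1 • f (x + ij.1) ((y + 1) + ij.2) := by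
      refine sum_congr rfl fun ij _ => ?_
      push_cast
      ring_nf
    rw [sum_antidiagonal_choose_succ_nsmul (fun i j => f (x + i) (y + j)), shift_left, shift_right,
      ih _ _ (by linarith) hy, ih _ _ hx (by linarith), add_comm, hf x y hx hy]

theorem betaFn_pos {x y : ℝ} (hx : 0 < x) (hy : 0 < y) : 0 < betaFn x y :=
  div_pos (mul_pos (Real.Gamma_pos_of_pos hx) (Real.Gamma_pos_of_pos hy))
    (Real.Gamma_pos_of_pos (add_pos hx hy))

theorem betaFn_add_one_left_add_betaFn_add_one_right {x y : ℝ} (hx : x ≠ 0) (hy : y ≠ 0)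
    (hxy : x + y ≠ 0) : betaFn (x + 1) y + betaFn x (y + 1) = betaFn x y := by
  unfold betaFn
  rw [add_right_comm, ← add_assoc, Real.Gamma_add_one hx, Real.Gamma_add_one hy,
    Real.Gamma_add_one hxy]
  by_cases hΓ : Real.Gamma (x + y) = 0
  · simp [hΓ]
  · field_simp

theorem beta_antidiagonal_sum (ρ₁ ρ₂ : ℝ) (hρ₁ : 0 < ρ₁) (hρ₂ : 0 < ρ₂) (k : ℕ) :
    ∑ p ∈ Finset.HasAntidiagonal.antidiagonal k,
      betaFn (ρ₁ + p.2) (ρ₂ + p.1) * (p.1 + p.2).factorial /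
        (betaFn ρ₁ ρ₂ * p.2.factorial * p.1.factorial) = 1 := by
  have hrec : ∀ a b : ℝ, 0 < a → 0 < b → betaFn b a = betaFn b (a + 1) + betaFn (b + 1) a := by
    intro a b ha hb
    rw [add_comm, betaFn_add_one_left_add_betaFn_add_one_right hb.ne' ha.ne' (add_pos hb ha).ne']
  calc _ = (∑ p ∈ antidiagonal k, k.choose p.1 • betaFn (ρ₁ + p.2) (ρ₂ + p.1)) / betaFn ρ₁ ρ₂ := by
        rw [sum_div]
        refine sum_congr rfl fun p hp => ?_
        rw [← mem_antidiagonal.mp hp, nsmul_eq_mul, Nat.cast_add_choose]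
        ring
    _ = 1 := by
      rw [sum_antidiagonal_choose_nsmul_of_eq_add (f := fun a b => betaFn b a)
        hrec k ρ₂ ρ₁ hρ₂ hρ₁, div_self (betaFn_pos hρ₁ hρ₂).ne']
end

section
/- Let f be continuous on [c, d] and let α, β, ω, ρ, κ be reals with α > 0, β > 0, κ > 0, κ - α < 1, ρ > 0. Then for x ∈ [c, d], the generalised Prabhakar integral ∫_c^x (x-t)^{β-1} E^{ρ,κ}_{α,β}(ω(x-t)^α) f(t) dt equals the sum Σ_{n=0}^∞ (Γ(ρ+κn) ωⁿ / (Γ(ρ) n!)) · (I_c^{αn+β} f)(x), where I_c^γ denotes the Riemann–Liouville fractional integral of order γ, and the series converges. -/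
/-- Riemann–Liouville fractional integral of order `γ` with base point `c`. -/
noncomputable def RL (c γ : ℝ) (f : ℝ → ℝ) (x : ℝ) : ℝ :=
  (1 / Real.Gamma γ) * ∫ t in c..x, (x - t) ^ (γ - 1) * f t

/-- Four-parameter generalised Mittag-Leffler function `E^{ρ,κ}_{α,β}`. -/
noncomputable def ML4 (α β ρ κ : ℝ) (z : ℝ) : ℝ :=
  ∑' n : ℕ, Real.Gamma (ρ + κ * n) * z ^ n /
    (Real.Gamma ρ * Real.Gamma (α * n + β) * n.factorial)

/-- Generalised Prabhakar fractional integral. -/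
noncomputable def GPrab (α β ω ρ κ c : ℝ) (f : ℝ → ℝ) (x : ℝ) : ℝ :=
  ∫ t in c..x, (x - t) ^ (β - 1) * ML4 α β ρ κ (ω * (x - t) ^ α) * f t

/-!
Expanding the Mittag-Leffler kernel as a power series `E(z) = ∑ cₙ zⁿ`, the integrand of the
Prabhakar integral becomes `∑ₙ cₙ ωⁿ (x - t) ^ (α n + β - 1) f t`, whose `n`-th term integrates to
`cₙ ωⁿ Γ(α n + β) (I^{α n + β} f)(x)`. Integrating term by term is legitimate as soon as
`∑ |cₙ| (|ω| (x - c) ^ α)ⁿ < ∞`, i.e. as soon as the series of `E` converges everywhere. That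
follows from the ratio test: log-convexity of `Γ` gives `Γ(X + κ) ≤ Γ(X) (X + κ) ^ κ` and
`Γ(Y) (Y - 1) ^ α ≤ Γ(Y + α)`, so `c_{n+1} / cₙ = O(n ^ (κ - α - 1)) → 0` because `κ - α < 1`.
-/

open Real Set Filter MeasureTheory Topology

namespace Real

theorem log_Gamma_add_one {x : ℝ} (hx : 0 < x) :
    log (Gamma (x + 1)) = log (Gamma x) + log x := by
  rw [Gamma_add_one hx.ne', log_mul hx.ne' (Gamma_pos_of_pos hx).ne', add_comm]

theorem Gamma_add_le_Gamma_mul_rpow {x s : ℝ} (hx : 0 < x) (hs : 0 < s) :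
    Gamma (x + s) ≤ Gamma x * (x + s) ^ s := by
  have hxs : 0 < x + s := by linarith
  have hslope := convexOn_log_Gamma.slope_mono_adjacent (mem_Ioi.2 hx)
    (mem_Ioi.2 (by linarith : (0 : ℝ) < x + s + 1)) (by linarith : x < x + s) (by linarith)
  simp only [Function.comp_apply, log_Gamma_add_one hxs, add_sub_cancel_left, div_one,
    div_le_iff₀ hs] at hslope
  rw [← log_le_log_iff (Gamma_pos_of_pos hxs) (by positivity),
    log_mul (Gamma_pos_of_pos hx).ne' (by positivity), log_rpow hxs]
  linarith

theorem Gamma_mul_rpow_le_Gamma_add {x s : ℝ} (hx : 1 < x) (hs : 0 < s) :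
    Gamma x * (x - 1) ^ s ≤ Gamma (x + s) := by
  have hx1 : 0 < x - 1 := by linarith
  have hslope := convexOn_log_Gamma.slope_mono_adjacent (mem_Ioi.2 hx1)
    (mem_Ioi.2 (by linarith : (0 : ℝ) < x + s)) (by linarith : x - 1 < x) (by linarith)
  have hrec := log_Gamma_add_one hx1
  rw [sub_add_cancel] at hrec
  simp only [Function.comp_apply, hrec, sub_sub_cancel, add_sub_cancel_left, div_one,
    le_div_iff₀ hs] at hslope
  rw [← log_le_log_iff (by positivity) (Gamma_pos_of_pos (by linarith)),
    log_mul (Gamma_pos_of_pos (by linarith)).ne' (by positivity), log_rpow hx1]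
  linarith

end Real

theorem hasSum_integral_tsum_mul_pow_mul {X : Type*} [MeasurableSpace X] {μ : Measure X}
    {a : ℕ → ℝ} {φ g : X → ℝ} {r : ℝ} (hφ : AEStronglyMeasurable φ μ)
    (hφr : ∀ᵐ t ∂μ, ‖φ t‖ ≤ r) (hg : Integrable g μ) (ha : Summable fun n => ‖a n‖ * r ^ n) :
    HasSum (fun n => a n * ∫ t, φ t ^ n * g t ∂μ) (∫ t, (∑' n, a n * φ t ^ n) * g t ∂μ) := by
  have hpow : ∀ n : ℕ, ∀ᵐ t ∂μ, ‖φ t ^ n‖ ≤ r ^ n := fun n => hφr.mono fun t ht => by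
    rw [norm_pow]
    exact pow_le_pow_left₀ (norm_nonneg _) ht n
  have hint : ∀ n, Integrable (fun t => a n * (φ t ^ n * g t)) μ := fun n =>
    (hg.bdd_mul (hφ.pow n) (hpow n)).const_mul (a n)
  have hnorm : ∀ n, ∫ t, ‖a n * (φ t ^ n * g t)‖ ∂μ ≤ ‖a n‖ * r ^ n * ∫ t, ‖g t‖ ∂μ := by
    intro n
    rw [← integral_const_mul]
    refine integral_mono_ae (hint n).norm (hg.norm.const_mul _) ((hpow n).mono fun t ht => ?_)
    simp only [norm_mul, mul_assoc]
    gcongr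
  have hsum : Summable fun n => ∫ t, ‖a n * (φ t ^ n * g t)‖ ∂μ :=
    .of_nonneg_of_le (fun n => integral_nonneg fun t => norm_nonneg _) hnorm (ha.mul_right _)
  have hterm : ∀ t, ∑' n, a n * (φ t ^ n * g t) = (∑' n, a n * φ t ^ n) * g t := fun t => by
    simp only [← mul_assoc, tsum_mul_right]
  simpa only [integral_const_mul, hterm] using hasSum_integral_of_summable_integral_norm hint hsum

theorem integral_Ioc_mul_rpow_pow_mul {c x : ℝ} (hcx : c ≤ x) (ω α β : ℝ) (f : ℝ → ℝ) (n : ℕ) :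
    ∫ t in Ioc c x, (ω * (x - t) ^ α) ^ n * ((x - t) ^ (β - 1) * f t) =
      ω ^ n * ∫ t in c..x, (x - t) ^ (α * n + β - 1) * f t := by
  rw [intervalIntegral.integral_of_le hcx, integral_Ioc_eq_integral_Ioo,
    integral_Ioc_eq_integral_Ioo, ← integral_const_mul]
  refine setIntegral_congr_fun measurableSet_Ioo fun t ht => ?_
  have hxt : 0 < x - t := sub_pos.2 ht.2
  calc (ω * (x - t) ^ α) ^ n * ((x - t) ^ (β - 1) * f t)
      = ω ^ n * ((x - t) ^ (α * n) * (x - t) ^ (β - 1) * f t) := by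
        rw [mul_pow, ← rpow_natCast ((x - t) ^ α), ← rpow_mul hxt.le]
        ring
    _ = ω ^ n * ((x - t) ^ (α * n + β - 1) * f t) := by rw [← rpow_add hxt, add_sub_assoc]

namespace ML4

noncomputable def coeff (α β ρ κ : ℝ) (n : ℕ) : ℝ :=
  Gamma (ρ + κ * n) / (Gamma ρ * Gamma (α * n + β) * n.factorial)

noncomputable def ratioBound (α β ρ κ : ℝ) (y : ℝ) : ℝ :=
  (ρ + κ * y + κ) ^ κ / ((α * y + β - 1) ^ α * (y + 1))

variable {α β ρ κ : ℝ}

theorem eq_tsum_coeff_mul_pow (z : ℝ) : ML4 α β ρ κ z = ∑' n, coeff α β ρ κ n * z ^ n :=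
  tsum_congr fun n => by rw [coeff, div_mul_eq_mul_div, mul_div_right_comm]

theorem coeff_nonneg (hα : 0 ≤ α) (hβ : 0 < β) (hρ : 0 < ρ) (hκ : 0 ≤ κ) (n : ℕ) :
    0 ≤ coeff α β ρ κ n := by
  have := Gamma_pos_of_pos hρ
  have := Gamma_pos_of_pos (by positivity : 0 < ρ + κ * n)
  have := Gamma_pos_of_pos (by positivity : 0 < α * n + β)
  unfold coeff
  positivity

theorem coeff_succ_le (hα : 0 < α) (hκ : 0 < κ) (hρ : 0 < ρ) {n : ℕ} (hn : 1 < α * n + β) :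
    coeff α β ρ κ (n + 1) ≤ ratioBound α β ρ κ n * coeff α β ρ κ n := by
  have hX : 0 < ρ + κ * n := by positivity
  have hY : 0 < α * n + β := by linarith
  have := Gamma_pos_of_pos hρ
  have := Gamma_pos_of_pos hX
  have := Gamma_pos_of_pos hY
  have hup := Gamma_add_le_Gamma_mul_rpow hX hκ
  have hlo := Gamma_mul_rpow_le_Gamma_add hn hα
  have : 0 < α * n + β - 1 := by linarith
  unfold coeff ratioBound
  rw [Nat.factorial_succ]
  push_cast
  rw [show ρ + κ * (n + 1) = ρ + κ * n + κ by ring, show α * (n + 1) + β = α * n + β + α by ring]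
  calc Gamma (ρ + κ * n + κ) / (Gamma ρ * Gamma (α * n + β + α) * ((n + 1) * n.factorial))
      ≤ Gamma (ρ + κ * n) * (ρ + κ * n + κ) ^ κ /
          (Gamma ρ * (Gamma (α * n + β) * (α * n + β - 1) ^ α) * ((n + 1) * n.factorial)) := by
        gcongr
    _ = _ := by field_simp

theorem tendsto_ratioBound (hα : 0 < α) (hκ : 0 < κ) (hκα : κ - α < 1) (hρ : 0 ≤ ρ) :
    Tendsto (ratioBound α β ρ κ) atTop (𝓝 0) := by
  have hlim : Tendsto (fun y : ℝ => (ρ + 2 * κ) ^ κ / (α / 2) ^ α * y ^ (κ - α - 1)) atTop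
      (𝓝 0) := by
    rw [show κ - α - 1 = -(α + 1 - κ) by ring]
    simpa using (tendsto_rpow_neg_atTop (by linarith : 0 < α + 1 - κ)).const_mul _
  have hlarge : ∀ᶠ y : ℝ in atTop, 1 ≤ y ∧ α / 2 * y ≤ α * y + β - 1 := by
    filter_upwards [eventually_ge_atTop (max 1 (2 * (1 - β) / α))] with y hy
    rw [max_le_iff, div_le_iff₀ hα] at hy
    constructor <;> linarith
  refine squeeze_zero' ?_ ?_ hlim
  · filter_upwards [hlarge] with y ⟨hy1, hy⟩
    have : 0 ≤ α * y + β - 1 := le_trans (by positivity) hy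
    unfold ratioBound
    positivity
  · filter_upwards [hlarge] with y ⟨hy1, hy⟩
    have hy0 : 0 < y := by linarith
    have : 0 < α * y + β - 1 := lt_of_lt_of_le (by positivity) hy
    calc ratioBound α β ρ κ y ≤ ((ρ + 2 * κ) * y) ^ κ / ((α / 2 * y) ^ α * y) := by
          unfold ratioBound
          gcongr
          · nlinarith
          · linarith
      _ = (ρ + 2 * κ) ^ κ / (α / 2) ^ α * y ^ (κ - α - 1) := by
          rw [mul_rpow (by positivity) hy0.le, mul_rpow (by positivity) hy0.le,
            rpow_sub_one hy0.ne', rpow_sub hy0]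
          field_simp

theorem summable_coeff_mul_pow (hα : 0 < α) (hβ : 0 < β) (hκ : 0 < κ) (hκα : κ - α < 1)
    (hρ : 0 < ρ) {s : ℝ} (hs : 0 ≤ s) : Summable fun n => coeff α β ρ κ n * s ^ n := by
  refine summable_of_ratio_norm_eventually_le (r := 1 / 2) (by norm_num) ?_
  have hsmall : ∀ᶠ n : ℕ in atTop, s * ratioBound α β ρ κ n ≤ 1 / 2 := by
    have := ((tendsto_ratioBound (β := β) hα hκ hκα hρ.le).comp
      tendsto_natCast_atTop_atTop).const_mul s
    rw [mul_zero] at this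
    exact this.eventually (eventually_le_nhds (by norm_num))
  have hlarge : ∀ᶠ n : ℕ in atTop, 1 < α * n + β :=
    (tendsto_atTop_add_const_right _ β
      (tendsto_natCast_atTop_atTop.const_mul_atTop hα)).eventually_gt_atTop 1
  filter_upwards [hsmall, hlarge] with n hn hn'
  have hc := coeff_nonneg hα.le hβ hρ hκ.le
  rw [norm_of_nonneg (mul_nonneg (hc _) (by positivity)),
    norm_of_nonneg (mul_nonneg (hc _) (by positivity)), pow_succ]
  calc coeff α β ρ κ (n + 1) * (s ^ n * s)
      ≤ ratioBound α β ρ κ n * coeff α β ρ κ n * (s ^ n * s) := by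
        gcongr
        exact coeff_succ_le hα hκ hρ hn'
    _ = s * ratioBound α β ρ κ n * (coeff α β ρ κ n * s ^ n) := by ring
    _ ≤ 1 / 2 * (coeff α β ρ κ n * s ^ n) := by
        gcongr
        exact mul_nonneg (hc n) (by positivity)

end ML4

theorem GPrab_series (c d α β ω ρ κ : ℝ)
    (hα : 0 < α) (hβ : 0 < β) (hκ : 0 < κ) (hκα : κ - α < 1) (hρ : 0 < ρ)
    (f : ℝ → ℝ) (hf : ContinuousOn f (Set.Icc c d)) :
    ∀ x ∈ Set.Icc c d,
      HasSum (fun n : ℕ =>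
          Real.Gamma (ρ + κ * n) * ω ^ n / (Real.Gamma ρ * n.factorial) *
            RL c (α * n + β) f x)
        (GPrab α β ω ρ κ c f x) := by
  rintro x ⟨hcx, hxd⟩
  have hfx : ContinuousOn f (uIcc c x) :=
    hf.mono (by rw [uIcc_of_le hcx]; exact Icc_subset_Icc_right hxd)
  have hg : IntegrableOn (fun t => (x - t) ^ (β - 1) * f t) (Ioc c x) := by
    rw [← intervalIntegrable_iff_integrableOn_Ioc_of_le hcx]
    refine IntervalIntegrable.mul_continuousOn ?_ hfx
    simpa using (intervalIntegral.intervalIntegrable_rpow' (by linarith : -1 < β - 1)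
      (a := x - c) (b := 0)).comp_sub_left x
  have hφ : ∀ᵐ t ∂(volume.restrict (Ioc c x)), ‖ω * (x - t) ^ α‖ ≤ |ω| * (x - c) ^ α :=
    ae_restrict_of_forall_mem measurableSet_Ioc fun t ht => by
      rw [norm_mul, norm_of_nonneg (rpow_nonneg (sub_nonneg.2 ht.2) _), norm_eq_abs]
      gcongr <;> linarith [ht.1, ht.2]
  have ha : Summable fun n => ‖ML4.coeff α β ρ κ n‖ * (|ω| * (x - c) ^ α) ^ n := by
    simp_rw [norm_of_nonneg (ML4.coeff_nonneg hα.le hβ hρ hκ.le _)]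
    exact ML4.summable_coeff_mul_pow hα hβ hκ hκα hρ (by positivity)
  convert hasSum_integral_tsum_mul_pow_mul (by fun_prop (disch := exact hα.le)) hφ hg ha using 1
  · funext n
    rw [integral_Ioc_mul_rpow_pow_mul hcx, RL, ML4.coeff]
    field_simp
  · rw [GPrab, intervalIntegral.integral_of_le hcx]
    congr 1
    funext t
    rw [ML4.eq_tsum_coeff_mul_pow]
    ring
end

section
/- Let f be continuous on [c, d], α > 0, β > 0, ρ > 0, ω ∈ ℝ, μ > 0. Then the Riemann–Liouville fractional integral of order μ commutes with the Prabhakar integral: I_c^μ (E^{ω,ρ}_{α,β;c+} f) = E^{ω,ρ}_{α,β;c+} (I_c^μ f) on [c, d]. -/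
/-- Three-parameter Mittag-Leffler function `E^ρ_{α,β}`. -/
noncomputable def ML3 (α β ρ : ℝ) (z : ℝ) : ℝ :=
  ∑' n : ℕ, Real.Gamma (ρ + n) * z ^ n /
    (Real.Gamma ρ * Real.Gamma (α * n + β) * n.factorial)

/-- Prabhakar fractional integral `E^{ω,ρ}_{α,β;c+}`. -/
noncomputable def Prab (α β ω ρ c : ℝ) (f : ℝ → ℝ) (x : ℝ) : ℝ :=
  ∫ t in c..x, (x - t) ^ (β - 1) * ML3 α β ρ (ω * (x - t) ^ α) * f t

/-!
Both operators are Volterra convolution operators `f ↦ ∫_c^x k (x - t) f t dt`, with the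
integrable kernels `u^(μ-1) / Γ(μ)` and `u^(β-1) E^ρ_{α,β}(ω u^α)`; the Mittag-Leffler function is
continuous because, by the log-convexity of `Γ`, its power series has infinite radius of
convergence. Once the kernels are truncated to `[0, x - c)` and `f` to `(c, x]`, composing two such
operators is an iterated integral over the plane, and Fubini's theorem together with the
substitution `s ↦ x + t - s` in the inner integral exchanges the two kernels.
-/

open Real Filter Topology MeasureTheory Set FormalMultilinearSeries

theorem Real.Gamma_mul_rpow_le_Gamma_add_s7 {x a : ℝ} (hx : 1 < x) (ha : 0 < a) :
    Gamma x * (x - 1) ^ a ≤ Gamma (x + a) := by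
  have hx₁ : 0 < x - 1 := by linarith
  have hslope := convexOn_log_Gamma.slope_mono_adjacent (mem_Ioi.2 hx₁)
    (mem_Ioi.2 (by linarith : 0 < x + a)) (sub_one_lt x) (lt_add_of_pos_right x ha)
  have hlog : log (Gamma x) - log (Gamma (x - 1)) = log (x - 1) := by
    have hΓ : Gamma x = (x - 1) * Gamma (x - 1) := by simpa using Gamma_add_one hx₁.ne'
    rw [hΓ, log_mul hx₁.ne' (Gamma_pos_of_pos hx₁).ne', add_sub_cancel_right]
  simp only [Function.comp, hlog, sub_sub_cancel, div_one, add_sub_cancel_left,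
    le_div_iff₀ ha] at hslope
  have hΓx := Gamma_pos_of_pos (by linarith : 0 < x)
  rw [← log_le_log_iff (mul_pos hΓx (rpow_pos_of_pos hx₁ a)) (Gamma_pos_of_pos (by linarith)),
    log_mul hΓx.ne' (rpow_pos_of_pos hx₁ a).ne', log_rpow hx₁]
  linarith

noncomputable def mlCoeff (α β ρ : ℝ) (n : ℕ) : ℝ :=
  Gamma (ρ + n) / (Gamma ρ * Gamma (α * n + β) * n.factorial)

section MittagLeffler

variable {α β ρ : ℝ}

theorem ML3_eq_ofScalarsSum : ML3 α β ρ = ofScalarsSum (mlCoeff α β ρ) := by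
  ext z
  simp only [ML3, ofScalars_sum_eq, mlCoeff, smul_eq_mul, mul_div_right_comm]

theorem mlCoeff_pos (hα : 0 ≤ α) (hβ : 0 < β) (hρ : 0 < ρ) (n : ℕ) : 0 < mlCoeff α β ρ n := by
  unfold mlCoeff
  positivity

theorem mlCoeff_succ_div (hα : 0 ≤ α) (hβ : 0 < β) (hρ : 0 < ρ) (n : ℕ) :
    mlCoeff α β ρ (n + 1) / mlCoeff α β ρ n
      = (ρ + n) / (n + 1) * (Gamma (α * n + β) / Gamma (α * n + β + α)) := by
  have hρn : Gamma (ρ + (n + 1 : ℕ)) = (ρ + n) * Gamma (ρ + n) := by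
    rw [Nat.cast_succ, ← add_assoc, Gamma_add_one (by positivity)]
  have hαn : α * ((n + 1 : ℕ) : ℝ) + β = α * n + β + α := by push_cast; ring
  rw [mlCoeff, mlCoeff, hρn, hαn, Nat.factorial_succ, Nat.cast_mul, Nat.cast_succ]
  field_simp

theorem tendsto_mlCoeff_succ_div (hα : 0 < α) (hβ : 0 < β) (hρ : 0 < ρ) :
    Tendsto (fun n ↦ mlCoeff α β ρ (n + 1) / mlCoeff α β ρ n) atTop (𝓝 0) := by
  have hlin : Tendsto (fun n : ℕ ↦ α * n + β - 1) atTop atTop := by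
    simpa only [add_sub_assoc] using
      tendsto_atTop_add_const_right _ (β - 1) (tendsto_natCast_atTop_atTop.const_mul_atTop hα)
  have hbound : Tendsto (fun n : ℕ ↦ (ρ + 1) * (α * n + β - 1) ^ (-α)) atTop (𝓝 0) := by
    simpa using ((tendsto_rpow_neg_atTop hα).comp hlin).const_mul (ρ + 1)
  refine squeeze_zero' (Eventually.of_forall fun n ↦
    (div_pos (mlCoeff_pos hα.le hβ hρ _) (mlCoeff_pos hα.le hβ hρ _)).le) ?_ hbound
  filter_upwards [hlin.eventually_gt_atTop 0] with n hn
  have hratio : Gamma (α * n + β) / Gamma (α * n + β + α) ≤ (α * n + β - 1) ^ (-α) := by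
    rw [rpow_neg hn.le, div_le_iff₀ (by positivity), ← div_eq_inv_mul,
      le_div_iff₀ (by positivity)]
    exact Gamma_mul_rpow_le_Gamma_add_s7 (by linarith) hα
  rw [mlCoeff_succ_div hα.le hβ hρ]
  have hn₀ : (ρ + n) / (n + 1) ≤ ρ + 1 := by
    rw [div_le_iff₀ (by positivity)]; nlinarith [n.cast_nonneg (α := ℝ)]
  gcongr

theorem continuous_ML3 (hα : 0 < α) (hβ : 0 < β) (hρ : 0 < ρ) : Continuous (ML3 α β ρ) := by
  have hradius : (ofScalars ℝ (mlCoeff α β ρ)).radius = ⊤ := by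
    refine ofScalars_radius_eq_top_of_tendsto _ _
      (Eventually.of_forall fun n ↦ (mlCoeff_pos hα.le hβ hρ n).ne') ?_
    simpa [Real.norm_of_nonneg (mlCoeff_pos hα.le hβ hρ _).le] using
      tendsto_mlCoeff_succ_div hα hβ hρ
  have := ((ofScalars ℝ (mlCoeff α β ρ)).hasFPowerSeriesOnBall (by simp [hradius])).continuousOn
  rw [hradius, Metric.eball_top, continuousOn_univ] at this
  rwa [ML3_eq_ofScalarsSum]

end MittagLeffler

noncomputable def volterra (k : ℝ → ℝ) (c : ℝ) (f : ℝ → ℝ) (x : ℝ) : ℝ :=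
  ∫ t in c..x, k (x - t) * f t

section WholeLine

variable {A B g : ℝ → ℝ}

theorem integrable_comp_sub_mul_comp_sub_mul (hA : Integrable A) (hB : Integrable B)
    (hg : AEStronglyMeasurable g) {M : ℝ} (hgM : ∀ t, ‖g t‖ ≤ M) (x : ℝ) :
    Integrable (fun p : ℝ × ℝ ↦ A (x - p.1) * B (p.1 - p.2) * g p.2) (volume.prod volume) := by
  have hmeas : AEStronglyMeasurable (fun p : ℝ × ℝ ↦ A (x - p.1) * B (p.1 - p.2))
      (volume.prod volume) :=
    (hA.comp_sub_left x).aestronglyMeasurable.comp_fst.mul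
      (hB.aestronglyMeasurable.comp_quasiMeasurePreserving
        (quasiMeasurePreserving_sub_of_right_invariant volume volume))
  have hAB : Integrable (fun p : ℝ × ℝ ↦ A (x - p.1) * B (p.1 - p.2)) (volume.prod volume) := by
    refine (integrable_prod_iff hmeas).2
      ⟨Eventually.of_forall fun s ↦ (hB.comp_sub_left s).const_mul (A (x - s)), ?_⟩
    simp_rw [norm_mul, integral_const_mul, integral_sub_left_eq_self (fun u ↦ ‖B u‖)]
    exact (hA.comp_sub_left x).norm.mul_const _
  exact hAB.mul_bdd hg.comp_snd (Eventually.of_forall fun p ↦ hgM p.2)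

theorem integral_comp_sub_mul_integral_comm (hA : Integrable A) (hB : Integrable B)
    (hg : AEStronglyMeasurable g) {M : ℝ} (hgM : ∀ t, ‖g t‖ ≤ M) (x : ℝ) :
    ∫ s, A (x - s) * ∫ t, B (s - t) * g t = ∫ s, B (x - s) * ∫ t, A (s - t) * g t := by
  have hsymm : ∀ t, ∫ s, A (x - s) * B (s - t) = ∫ s, B (x - s) * A (s - t) := fun t ↦ by
    rw [← integral_sub_left_eq_self _ volume (x + t)]
    congr 1 with s
    ring_nf
  calc ∫ s, A (x - s) * ∫ t, B (s - t) * g t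
      = ∫ s, ∫ t, A (x - s) * B (s - t) * g t := by simp only [mul_assoc, integral_const_mul]
    _ = ∫ t, ∫ s, A (x - s) * B (s - t) * g t :=
      integral_integral_swap (integrable_comp_sub_mul_comp_sub_mul hA hB hg hgM x)
    _ = ∫ t, ∫ s, B (x - s) * A (s - t) * g t := by simp only [integral_mul_const, hsymm]
    _ = ∫ s, ∫ t, B (x - s) * A (s - t) * g t :=
      (integral_integral_swap (integrable_comp_sub_mul_comp_sub_mul hB hA hg hgM x)).symm
    _ = ∫ s, B (x - s) * ∫ t, A (s - t) * g t := by simp only [mul_assoc, integral_const_mul]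

end WholeLine

section Truncation

variable {k h : ℝ → ℝ} {c x s : ℝ}

theorem indicator_Ico_comp_sub_mul (V : ℝ → ℝ) :
    (fun s ↦ (Ico 0 (x - c)).indicator k (x - s) * V s)
      = (Ioc c x).indicator (fun s ↦ k (x - s) * V s) := by
  have hset : (x - ·) ⁻¹' Ico 0 (x - c) = Ioc c x := by
    ext s
    simp only [mem_preimage, mem_Ico, mem_Ioc]
    constructor <;> rintro ⟨h₁, h₂⟩ <;> constructor <;> linarith
  ext s
  rw [indicator_mul_left, ← hset, ← indicator_comp_right]
  rfl

theorem integral_indicator_mul_indicator_eq_volterra (hs : s ∈ Icc c x) :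
    ∫ t, (Ico 0 (x - c)).indicator k (s - t) * (Ioc c x).indicator h t = volterra k c h s := by
  have hset : (s - ·) ⁻¹' Ico 0 (x - c) ∩ Ioc c x = Ioc c s := by
    ext t
    simp only [mem_inter_iff, mem_preimage, mem_Ico, mem_Ioc]
    constructor
    · rintro ⟨⟨hts, -⟩, hct, -⟩
      exact ⟨hct, by linarith⟩
    · rintro ⟨hct, hts⟩
      exact ⟨⟨by linarith, by linarith [hs.2]⟩, hct, by linarith [hs.2]⟩
  have hpt : ∀ t, (Ico 0 (x - c)).indicator k (s - t) * (Ioc c x).indicator h t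
      = (Ioc c s).indicator (fun t ↦ k (s - t) * h t) t := fun t ↦ by
    rw [← hset, inter_indicator_mul, ← indicator_comp_right]
    rfl
  simp only [hpt, integral_indicator measurableSet_Ioc, volterra,
    intervalIntegral.integral_of_le hs.1]

theorem volterra_volterra_eq_integral {k₁ k₂ f : ℝ → ℝ} (hcx : c ≤ x) :
    volterra k₁ c (volterra k₂ c f) x
      = ∫ s, (Ico 0 (x - c)).indicator k₁ (x - s) *
          ∫ t, (Ico 0 (x - c)).indicator k₂ (s - t) * (Ioc c x).indicator f t := by
  rw [indicator_Ico_comp_sub_mul, integral_indicator measurableSet_Ioc, volterra,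
    intervalIntegral.integral_of_le hcx]
  refine setIntegral_congr_fun measurableSet_Ioc fun s hs ↦ ?_
  rw [integral_indicator_mul_indicator_eq_volterra (Ioc_subset_Icc_self hs)]

end Truncation

theorem volterra_comm {k₁ k₂ f : ℝ → ℝ} {c x : ℝ} (hcx : c ≤ x)
    (hk₁ : IntervalIntegrable k₁ volume 0 (x - c)) (hk₂ : IntervalIntegrable k₂ volume 0 (x - c))
    (hf : ContinuousOn f (Icc c x)) :
    volterra k₁ c (volterra k₂ c f) x = volterra k₂ c (volterra k₁ c f) x := by
  have htrunc : ∀ {k : ℝ → ℝ}, IntervalIntegrable k volume 0 (x - c) →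
      Integrable ((Ico 0 (x - c)).indicator k) := fun hk ↦
    (integrable_indicator_iff measurableSet_Ico).2
      ((intervalIntegrable_iff_integrableOn_Ico_of_le (sub_nonneg.2 hcx)).1 hk)
  obtain ⟨M, hM⟩ := isCompact_Icc.exists_bound_of_continuousOn hf
  have hgM : ∀ t, ‖(Ioc c x).indicator f t‖ ≤ M := fun t ↦ by
    rw [norm_indicator_eq_indicator_norm]
    exact indicator_apply_le' (fun ht ↦ hM t (Ioc_subset_Icc_self ht))
      fun _ ↦ (norm_nonneg _).trans (hM c (left_mem_Icc.2 hcx))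
  have hg : AEStronglyMeasurable ((Ioc c x).indicator f) :=
    (aestronglyMeasurable_indicator_iff measurableSet_Ioc).2
      ((hf.mono Ioc_subset_Icc_self).aestronglyMeasurable measurableSet_Ioc)
  rw [volterra_volterra_eq_integral hcx, volterra_volterra_eq_integral hcx]
  exact integral_comp_sub_mul_integral_comm (htrunc hk₁) (htrunc hk₂) hg hgM x

noncomputable def rlKernel (μ u : ℝ) : ℝ := 1 / Gamma μ * u ^ (μ - 1)

noncomputable def prabKernel (α β ω ρ u : ℝ) : ℝ := u ^ (β - 1) * ML3 α β ρ (ω * u ^ α)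

theorem RL_eq_volterra (c μ : ℝ) : RL c μ = volterra (rlKernel μ) c := by
  ext f x
  simp only [RL, volterra, rlKernel, mul_assoc, intervalIntegral.integral_const_mul]

theorem Prab_eq_volterra (α β ω ρ c : ℝ) : Prab α β ω ρ c = volterra (prabKernel α β ω ρ) c :=
  rfl

theorem intervalIntegrable_rlKernel {μ : ℝ} (hμ : 0 < μ) (a b : ℝ) :
    IntervalIntegrable (rlKernel μ) volume a b :=
  (intervalIntegral.intervalIntegrable_rpow' (by linarith)).const_mul _

theorem intervalIntegrable_prabKernel {α β ρ : ℝ} (hα : 0 < α) (hβ : 0 < β) (hρ : 0 < ρ)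
    (ω a b : ℝ) : IntervalIntegrable (prabKernel α β ω ρ) volume a b :=
  (intervalIntegral.intervalIntegrable_rpow' (by linarith)).mul_continuousOn <|
    ((continuous_ML3 hα hβ hρ).comp
      (continuous_const.mul (continuous_rpow_const hα.le))).continuousOn

theorem RL_commutes_Prab (c d α β ρ ω μ : ℝ)
    (hα : 0 < α) (hβ : 0 < β) (hρ : 0 < ρ) (hμ : 0 < μ)
    (f : ℝ → ℝ) (hf : ContinuousOn f (Set.Icc c d)) :
    ∀ x ∈ Set.Icc c d, RL c μ (Prab α β ω ρ c f) x = Prab α β ω ρ c (RL c μ f) x := by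
  intro x hx
  rw [RL_eq_volterra, Prab_eq_volterra]
  exact volterra_comm hx.1 (intervalIntegrable_rlKernel hμ _ _)
    (intervalIntegrable_prabKernel hα hβ hρ ω _ _) (hf.mono (Icc_subset_Icc_right hx.2))
end
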